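/- Let 0 < h₂ ≤ h₁ < 1, set ρ = √(1 − h₁²), let σ(s) = (ρ cos s, ρ sin s, h₁) be the latitude circle of the unit sphere at height h₁, let θ = arccos(h₂/h₁), and define r(s, β) = cos β · σ(s) + sin β · σ'(s)/‖σ'(s)‖. Then ∫₀^{2π} ∫₀^θ ‖(∂r/∂s)(s, β) × (∂r/∂β)(s, β)‖ dβ ds = 2π(h₁ − h₂); that is, the area of the spherical zone between heights h₂ and h₁ equals the area 2π(h₁ − h₂) of its radial projection onto the circumscribed cylinder (Archimedes' theorem). -/

import Mathlib

/-!
The zone is swept by rotating a great-circle arc about the `z`-axis, so `∂ₛr = e_z × r`, while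
`∂_β r ⊥ r` on the unit sphere. Hence `∂ₛr × ∂_β r = (e_z ⬝ ∂_β r) r`: the area element is
`|∂_β z| ds dβ = h₁ sin β ds dβ`, the same as that of the height `z = h₁ cos β` on the circumscribed
cylinder. Integrating over `β ∈ [0, θ]` gives `h₁ (1 - cos θ) = h₁ - h₂` for every `s`.
-/

open Real intervalIntegral

noncomputable def cross3 (a b : EuclideanSpace ℝ (Fin 3)) : EuclideanSpace ℝ (Fin 3) :=
  (WithLp.equiv 2 (Fin 3 → ℝ)).symm
    (crossProduct ((WithLp.equiv 2 (Fin 3 → ℝ)) a) ((WithLp.equiv 2 (Fin 3 → ℝ)) b))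

lemma HasDerivAt.euclideanSpace_vec3 {f g h : ℝ → ℝ} {f' g' h' x : ℝ}
    (hf : HasDerivAt f f' x) (hg : HasDerivAt g g' x) (hh : HasDerivAt h h' x) :
    HasDerivAt (F := EuclideanSpace ℝ (Fin 3)) (fun t => !₂[f t, g t, h t]) !₂[f', g', h'] x := by
  have hpi : HasDerivAt (fun t => (![f t, g t, h t] : Fin 3 → ℝ)) ![f', g', h'] x :=
    hasDerivAt_pi.2 fun i => by fin_cases i <;> simpa
  exact (PiLp.continuousLinearEquiv 2 ℝ (fun _ : Fin 3 => ℝ)).symm.hasFDerivAt.comp_hasDerivAt x hpi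

lemma EuclideanSpace.norm_vec3 (a b c : ℝ) : ‖!₂[a, b, c]‖ = √(a ^ 2 + b ^ 2 + c ^ 2) := by
  simp [EuclideanSpace.norm_eq, Fin.sum_univ_three]

lemma cross3_vec3 (a b c d e f : ℝ) :
    cross3 !₂[a, b, c] !₂[d, e, f] = !₂[b * f - c * e, c * d - a * f, a * e - b * d] := by
  simp [cross3, cross_apply]

noncomputable def latitude (ρ h s : ℝ) : EuclideanSpace ℝ (Fin 3) :=
  !₂[ρ * cos s, ρ * sin s, h]

lemma hasDerivAt_latitude (ρ h s : ℝ) :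
    HasDerivAt (latitude ρ h) !₂[-(ρ * sin s), ρ * cos s, 0] s := by
  refine (((hasDerivAt_cos s).const_mul ρ).euclideanSpace_vec3
    ((hasDerivAt_sin s).const_mul ρ) (hasDerivAt_const s h)).congr_deriv ?_
  ring_nf

lemma norm_deriv_latitude (ρ h s : ℝ) : ‖deriv (latitude ρ h) s‖ = |ρ| := by
  rw [(hasDerivAt_latitude ρ h s).deriv, EuclideanSpace.norm_vec3, ← sqrt_sq_eq_abs]
  congr 1
  linear_combination ρ ^ 2 * sin_sq_add_cos_sq s

noncomputable def sweptPoint (ρ h s β : ℝ) : EuclideanSpace ℝ (Fin 3) :=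
  !₂[ρ * cos β * cos s - sin β * sin s, ρ * cos β * sin s + sin β * cos s, h * cos β]

lemma deriv_sweptPoint_left (ρ h s β : ℝ) :
    deriv (fun u => sweptPoint ρ h u β) s =
      !₂[-(ρ * cos β * sin s) - sin β * cos s, ρ * cos β * cos s - sin β * sin s, 0] := by
  have hx := ((hasDerivAt_cos s).const_mul (ρ * cos β)).sub ((hasDerivAt_sin s).const_mul (sin β))
  have hy := ((hasDerivAt_sin s).const_mul (ρ * cos β)).add ((hasDerivAt_cos s).const_mul (sin β))
  refine (hx.euclideanSpace_vec3 hy (hasDerivAt_const s (h * cos β))).congr_deriv ?_ |>.deriv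
  ring_nf

lemma deriv_sweptPoint_right (ρ h s β : ℝ) :
    deriv (sweptPoint ρ h s) β =
      !₂[-(ρ * sin β * cos s) - cos β * sin s, cos β * cos s - ρ * sin β * sin s,
        -(h * sin β)] := by
  have hx := (((hasDerivAt_cos β).const_mul ρ).mul_const (cos s)).sub
    ((hasDerivAt_sin β).mul_const (sin s))
  have hy := (((hasDerivAt_cos β).const_mul ρ).mul_const (sin s)).add
    ((hasDerivAt_sin β).mul_const (cos s))
  refine (hx.euclideanSpace_vec3 hy ((hasDerivAt_cos β).const_mul h)).congr_deriv ?_ |>.deriv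
  ring_nf

lemma cross3_deriv_sweptPoint {ρ h : ℝ} (hρh : ρ ^ 2 + h ^ 2 = 1) (s β : ℝ) :
    cross3 (deriv (fun u => sweptPoint ρ h u β) s) (deriv (sweptPoint ρ h s) β) =
      -(h * sin β) • sweptPoint ρ h s β := by
  rw [deriv_sweptPoint_left, deriv_sweptPoint_right, cross3_vec3, sweptPoint]
  ext i
  fin_cases i <;> simp only [Fin.zero_eta, Fin.mk_one, Fin.reduceFinMk, Fin.isValue,
    Matrix.cons_val_zero, Matrix.cons_val_one, Matrix.cons_val, PiLp.smul_apply, smul_eq_mul]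
  · ring
  · ring
  · linear_combination (cos β * sin β) * ((ρ ^ 2 - 1) * sin_sq_add_cos_sq s + hρh)

lemma norm_sweptPoint {ρ h : ℝ} (hρh : ρ ^ 2 + h ^ 2 = 1) (s β : ℝ) :
    ‖sweptPoint ρ h s β‖ = 1 := by
  rw [sweptPoint, EuclideanSpace.norm_vec3, sqrt_eq_one]
  linear_combination cos β ^ 2 * hρh + (sin β ^ 2 + ρ ^ 2 * cos β ^ 2) * sin_sq_add_cos_sq s +
    sin_sq_add_cos_sq β

lemma cos_smul_latitude_add_sin_smul_unitTangent {ρ : ℝ} (hρ : 0 < ρ) (h s β : ℝ) :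
    cos β • latitude ρ h s + (sin β / ‖deriv (latitude ρ h) s‖) • deriv (latitude ρ h) s =
      sweptPoint ρ h s β := by
  rw [norm_deriv_latitude, abs_of_pos hρ, (hasDerivAt_latitude ρ h s).deriv]
  ext i
  fin_cases i <;> simp only [latitude, sweptPoint, Fin.zero_eta, Fin.mk_one, Fin.reduceFinMk,
    Fin.isValue, Matrix.cons_val_zero, Matrix.cons_val_one, Matrix.cons_val, PiLp.add_apply,
    PiLp.smul_apply, smul_eq_mul]
  · field_simp
    ring
  · field_simp
  · ring

lemma norm_cross3_deriv_sweptPoint {ρ h : ℝ} (hρh : ρ ^ 2 + h ^ 2 = 1) (s β : ℝ) :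
    ‖cross3 (deriv (fun u => sweptPoint ρ h u β) s) (deriv (sweptPoint ρ h s) β)‖ =
      |h * sin β| := by
  rw [cross3_deriv_sweptPoint hρh, norm_smul, norm_sweptPoint hρh, mul_one, norm_neg,
    Real.norm_eq_abs]

lemma integral_norm_cross3_deriv_sweptPoint {ρ h θ : ℝ} (hρh : ρ ^ 2 + h ^ 2 = 1) (hh : 0 ≤ h)
    (hθ₀ : 0 ≤ θ) (hθπ : θ ≤ π) (s : ℝ) :
    ∫ β in (0:ℝ)..θ, ‖cross3 (deriv (fun u => sweptPoint ρ h u β) s) (deriv (sweptPoint ρ h s) β)‖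
      = h * (1 - cos θ) := by
  have h_integrand : Set.EqOn
      (fun β => ‖cross3 (deriv (fun u => sweptPoint ρ h u β) s) (deriv (sweptPoint ρ h s) β)‖)
      (fun β => h * sin β) (Set.uIcc 0 θ) := by
    intro β hβ
    rw [Set.uIcc_of_le hθ₀] at hβ
    simp only [norm_cross3_deriv_sweptPoint hρh, abs_eq_self]
    exact mul_nonneg hh (sin_nonneg_of_nonneg_of_le_pi hβ.1 (hβ.2.trans hθπ))
  rw [integral_congr h_integrand, integral_const_mul, integral_sin, cos_zero]

/-- Archimedes' theorem, as a special case of the spherical swept-area formula: the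
area of the spherical zone between heights `h₂ ≤ h₁`, swept by the tangent segment of
angular length `θ = arccos (h₂/h₁)` moving along the latitude circle at height `h₁`,
equals `2π(h₁ − h₂)`, the area of its radial projection onto the circumscribed
cylinder. -/
theorem archimedes_zone_area
    (h₁ h₂ : ℝ) (h0 : 0 < h₂) (h21 : h₂ ≤ h₁) (h11 : h₁ < 1)
    (ρ θ : ℝ) (hρ : ρ = Real.sqrt (1 - h₁ ^ 2)) (hθ : θ = Real.arccos (h₂ / h₁))
    (σ : ℝ → EuclideanSpace ℝ (Fin 3))
    (hσ : ∀ s, σ s = (WithLp.equiv 2 (Fin 3 → ℝ)).symm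
      ![ρ * Real.cos s, ρ * Real.sin s, h₁])
    (r : ℝ → ℝ → EuclideanSpace ℝ (Fin 3))
    (hr : ∀ s β, r s β =
      Real.cos β • σ s + (Real.sin β / ‖deriv σ s‖) • deriv σ s) :
    (∫ s in (0:ℝ)..(2 * Real.pi), ∫ β in (0:ℝ)..θ,
        ‖cross3 (deriv (fun u => r u β) s) (deriv (r s) β)‖)
      = 2 * Real.pi * (h₁ - h₂) := by
  have h₁_pos : 0 < h₁ := h0.trans_le h21
  have hρh : ρ ^ 2 + h₁ ^ 2 = 1 := by
    rw [hρ, sq_sqrt (by nlinarith)]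
    ring
  have hρ_pos : 0 < ρ := hρ ▸ sqrt_pos.2 (by nlinarith)
  obtain rfl : σ = latitude ρ h₁ := funext hσ
  obtain rfl : r = sweptPoint ρ h₁ := by
    funext s β
    rw [hr, cos_smul_latitude_add_sin_smul_unitTangent hρ_pos]
  have hcos : cos θ = h₂ / h₁ :=
    hθ ▸ cos_arccos (by rw [le_div_iff₀ h₁_pos]; linarith) ((div_le_one h₁_pos).2 h21)
  simp only [integral_norm_cross3_deriv_sweptPoint hρh h₁_pos.le (hθ ▸ arccos_nonneg _)
    (hθ ▸ arccos_le_pi _), hcos, integral_const, smul_eq_mul, sub_zero]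
  field_simp
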